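/- For the Model 1 chain on a connected graph with N ≥ 2 and M ≥ 1, the unique stationary distribution is uniform on 𝒜_{N,M}, and for any initial configuration the distribution at time t converges: lim_{t→∞} P(ξ_t = ξ) = 1/C(M+N−1, N−1) for every ξ ∈ 𝒜_{N,M}. -/

import Mathlib

/-!
The transition matrix `P` of Model 1 on `𝒜_{N,M}` is symmetric, because moving a dollar along
`(x, y)` is undone by moving it back along `(y, x)`; being stochastic, it is doubly stochastic.
It is primitive: every configuration reaches the one with all dollars at a vertex `v` by sending
dollars one at a time along walks, by symmetry that configuration reaches every other one, and it
holds with positive probability, since a move out of an empty neighbour of `v` changes nothing.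
By Doeblin's argument, if all entries of `P ^ k` are at least `δ > 0`, then `k` further steps
shrink the spread of every column of `P ^ t` by the factor `1 - |𝒜| δ`; as columns sum to `1`,
`P ^ t` tends to the matrix with all entries `1 / |𝒜|`. A stationary `μ` satisfies
`μ = μ P ^ t → (∑ μ) / |𝒜|`. Finally, `𝒜_{N,M}` is in bijection with the multisets of size `M`
on `N` points.
-/
 

open Filter

/-- The result of moving one dollar from `x` to `y` in configuration `ξ`
(nothing happens if `ξ x = 0`). -/
def moveDollar {V : Type*} [DecidableEq V] (ξ : V → ℕ) (x y : V) : V → ℕ :=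
  fun z => if ξ x = 0 then ξ z
    else ξ z - (if z = x then 1 else 0) + (if z = y then 1 else 0)

/-- The state space `𝒜_{N,M}` of configurations with `M` dollars, as a finite set. -/
def stateSpace (V : Type*) [Fintype V] [DecidableEq V] (M : ℕ) : Finset (V → ℕ) :=
  (Fintype.piFinset fun _ : V => Finset.range (M + 1)).filter fun ξ => ∑ x, ξ x = M

/-- Model 1 transition probabilities: an oriented edge `(x,y)` is chosen uniformly among
the `2|E|` oriented edges and one dollar moves from `x` to `y` if possible. -/
noncomputable def pOne {V : Type*} [Fintype V] [DecidableEq V] (G : SimpleGraph V)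
    [DecidableRel G.Adj] (ξ ξ' : V → ℕ) : ℝ :=
  ((Finset.univ.filter fun e : V × V => G.Adj e.1 e.2 ∧ moveDollar ξ e.1 e.2 = ξ').card : ℝ)
    / ((Finset.univ.filter fun e : V × V => G.Adj e.1 e.2).card : ℝ)

/-- `t`-step transition probabilities of Model 1. -/
noncomputable def pOneIter {V : Type*} [Fintype V] [DecidableEq V] (G : SimpleGraph V)
    [DecidableRel G.Adj] (M : ℕ) : ℕ → (V → ℕ) → (V → ℕ) → ℝ
  | 0, ξ, ξ' => if ξ = ξ' then 1 else 0
  | t + 1, ξ, ξ' => ∑ η ∈ stateSpace V M, pOneIter G M t ξ η * pOne G η ξ'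

open Topology Relation

lemma Relation.ReflTransGen.exists_subtype {α : Type*} {r : α → α → Prop} {s : Set α}
    (hs : ∀ a b, a ∈ s → r a b → b ∈ s) {a b : α} (h : ReflTransGen r a b) (ha : a ∈ s) :
    ∃ hb : b ∈ s, ReflTransGen (fun x y : s => r x y) ⟨a, ha⟩ ⟨b, hb⟩ := by
  induction h with
  | refl => exact ⟨ha, .refl⟩
  | tail _ hstep ih =>
    obtain ⟨hb, ih⟩ := ih
    exact ⟨hs _ _ hb hstep, ih.tail hstep⟩

namespace Matrix

section Positivity
variable {n R : Type*} [Fintype n] [DecidableEq n] [Ring R] [LinearOrder R]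
  [IsStrictOrderedRing R] {P : Matrix n n R}

lemma pow_add_apply_pos (hP : ∀ i j, 0 ≤ P i j) {s t : ℕ} {i l j : n}
    (hs : 0 < (P ^ s) i l) (ht : 0 < (P ^ t) l j) : 0 < (P ^ (s + t)) i j := by
  rw [pow_add, mul_apply]
  exact Finset.sum_pos' (fun m _ => mul_nonneg (pow_apply_nonneg hP s i m)
    (pow_apply_nonneg hP t m j)) ⟨l, Finset.mem_univ l, mul_pos hs ht⟩

lemma exists_pow_apply_pos_of_reflTransGen (hP : ∀ i j, 0 ≤ P i j) {i j : n}
    (h : ReflTransGen (fun a b => 0 < P a b) i j) : ∃ t, 0 < (P ^ t) i j := by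
  induction h with
  | refl => exact ⟨0, by simp⟩
  | tail _ hstep ih =>
    obtain ⟨t, ht⟩ := ih
    exact ⟨t + 1, pow_add_apply_pos hP ht (by rwa [pow_one])⟩

lemma pow_apply_self_pos (hP : ∀ i j, 0 ≤ P i j) {h : n} (hloop : 0 < P h h) (t : ℕ) :
    0 < (P ^ t) h h := by
  induction t with
  | zero => simp
  | succ t ih => exact pow_add_apply_pos hP ih (by rwa [pow_one])

-- The loop at `h` pads paths through `h` to any sufficiently large common length.
lemma isPrimitive_of_loop (hP : ∀ i j, 0 ≤ P i j) {h : n} (hloop : 0 < P h h)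
    (hin : ∀ i, ∃ s, 0 < (P ^ s) i h) (hout : ∀ j, ∃ s, 0 < (P ^ s) h j) : P.IsPrimitive := by
  have hin' : ∀ᶠ t in atTop, ∀ i, 0 < (P ^ t) i h := by
    refine eventually_all.2 fun i => ?_
    obtain ⟨s, hs⟩ := hin i
    filter_upwards [eventually_ge_atTop s] with t hst
    obtain ⟨d, rfl⟩ := Nat.exists_eq_add_of_le hst
    exact pow_add_apply_pos hP hs (pow_apply_self_pos hP hloop d)
  have hout' : ∀ᶠ t in atTop, ∀ j, 0 < (P ^ t) h j := by
    refine eventually_all.2 fun j => ?_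
    obtain ⟨s, hs⟩ := hout j
    filter_upwards [eventually_ge_atTop s] with t hst
    obtain ⟨d, rfl⟩ := Nat.exists_eq_add_of_le' hst
    exact pow_add_apply_pos hP (pow_apply_self_pos hP hloop d) hs
  obtain ⟨t, ht, hin_t, hout_t⟩ := ((eventually_gt_atTop 0).and (hin'.and hout')).exists
  exact ⟨hP, t + t, by omega, fun i j => pow_add_apply_pos hP (hin_t i) (hout_t j)⟩

end Positivity

section Doeblin
variable {n : Type*} [Fintype n]

lemma exists_bounds_mulVec {Q : Matrix n n ℝ} (hQ : ∀ i, ∑ l, Q i l = 1) {δ : ℝ}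
    (hδ : ∀ i l, δ ≤ Q i l) {x : n → ℝ} {a D : ℝ} (hx : ∀ l, a ≤ x l ∧ x l ≤ a + D) :
    ∃ a', ∀ i, a' ≤ (Q *ᵥ x) i ∧ (Q *ᵥ x) i ≤ a' + (1 - Fintype.card n * δ) * D := by
  refine ⟨δ * ∑ l, x l + (1 - Fintype.card n * δ) * a, fun i => ?_⟩
  have hsplit : (Q *ᵥ x) i = δ * ∑ l, x l + ∑ l, (Q i l - δ) * x l := by
    simp only [mulVec, dotProduct, Finset.mul_sum, ← Finset.sum_add_distrib]
    exact Finset.sum_congr rfl fun l _ => by ring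
  have hweights : ∑ l, (Q i l - δ) = 1 - Fintype.card n * δ := by
    rw [Finset.sum_sub_distrib, hQ i, Finset.sum_const, nsmul_eq_mul, Finset.card_univ]
  have hlow : ∑ l, (Q i l - δ) * a ≤ ∑ l, (Q i l - δ) * x l :=
    Finset.sum_le_sum fun l _ => mul_le_mul_of_nonneg_left (hx l).1 (sub_nonneg.2 (hδ i l))
  have hup : ∑ l, (Q i l - δ) * x l ≤ ∑ l, (Q i l - δ) * (a + D) :=
    Finset.sum_le_sum fun l _ => mul_le_mul_of_nonneg_left (hx l).2 (sub_nonneg.2 (hδ i l))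
  rw [← Finset.sum_mul, hweights] at hlow hup
  constructor <;> nlinarith

lemma abs_sub_inv_card_le {x : n → ℝ} (hsum : ∑ l, x l = 1) {a D : ℝ}
    (hx : ∀ l, a ≤ x l ∧ x l ≤ a + D) (i : n) : |x i - (Fintype.card n : ℝ)⁻¹| ≤ D := by
  set c : ℝ := (Fintype.card n : ℝ)
  have hc : 0 < c := Nat.cast_pos.2 (Fintype.card_pos_iff.2 ⟨i⟩)
  have hlow : c * a ≤ 1 := by
    simpa [c, ← hsum] using Finset.sum_le_sum fun l (_ : l ∈ Finset.univ) => (hx l).1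
  have hup : 1 ≤ c * (a + D) := by
    simpa [c, ← hsum, ← mul_add] using Finset.sum_le_sum fun l (_ : l ∈ Finset.univ) => (hx l).2
  have hscaled : |c * x i - 1| ≤ c * D :=
    abs_sub_le_iff.2 ⟨by nlinarith [(hx i).2], by nlinarith [(hx i).1]⟩
  rwa [show x i - c⁻¹ = (c * x i - 1) / c by field_simp, abs_div, abs_of_pos hc,
    div_le_iff₀ hc, mul_comm D]

lemma exists_bounds_pow_mulVec [DecidableEq n] {Q : Matrix n n ℝ} (hQ : ∀ i, ∑ l, Q i l = 1)
    {δ : ℝ} (hδ : ∀ i l, δ ≤ Q i l) {x : n → ℝ} {a D : ℝ} (hx : ∀ l, a ≤ x l ∧ x l ≤ a + D)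
    (q : ℕ) : ∃ a', ∀ i, a' ≤ (Q ^ q *ᵥ x) i ∧
      (Q ^ q *ᵥ x) i ≤ a' + (1 - Fintype.card n * δ) ^ q * D := by
  induction q with
  | zero => simpa using ⟨a, hx⟩
  | succ q ih =>
    obtain ⟨a', ha'⟩ := ih
    rw [pow_succ', ← mulVec_mulVec, pow_succ', mul_assoc]
    exact exists_bounds_mulVec hQ hδ ha'

theorem IsPrimitive.tendsto_pow_apply [DecidableEq n] {P : Matrix n n ℝ} (hprim : P.IsPrimitive)
    (hP : P ∈ doublyStochastic ℝ n) (i j : n) :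
    Tendsto (fun t => (P ^ t) i j) atTop (𝓝 (Fintype.card n : ℝ)⁻¹) := by
  have : Nonempty n := ⟨i⟩
  obtain ⟨k, hk, hpos⟩ := hprim.exists_pos_pow
  obtain ⟨p, hp⟩ := Finite.exists_min fun p : n × n => (P ^ k) p.1 p.2
  set δ := (P ^ k) p.1 p.2
  set r := 1 - Fintype.card n * δ
  have hr0 : 0 ≤ r := by
    have := Finset.sum_le_sum fun l (_ : l ∈ Finset.univ) => hp (i, l)
    rw [sum_row_of_mem_doublyStochastic (pow_mem hP k)] at this
    simp only [Finset.sum_const, Finset.card_univ, nsmul_eq_mul] at this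
    linarith
  have hr1 : r < 1 := by
    have : (0 : ℝ) < Fintype.card n := Nat.cast_pos.2 (Fintype.card_pos_iff.2 ⟨i⟩)
    have := mul_pos this (hpos p.1 p.2)
    linarith
  have hcol : ∀ q s, (P ^ k) ^ q *ᵥ (fun l => (P ^ s) l j) = fun l => (P ^ (k * q + s)) l j := by
    intro q s
    ext l
    rw [pow_add, pow_mul]
    rfl
  have hbound : ∀ t, |(P ^ t) i j - (Fintype.card n : ℝ)⁻¹| ≤ r ^ (t / k) := by
    intro t
    obtain ⟨a, ha⟩ := exists_bounds_pow_mulVec (sum_row_of_mem_doublyStochastic (pow_mem hP k))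
      (fun a b => hp (a, b)) (a := 0) (D := 1) (fun l => ⟨nonneg_of_mem_doublyStochastic
        (pow_mem hP _), by simpa using le_one_of_mem_doublyStochastic (pow_mem hP _)⟩) (t / k)
    rw [hcol, Nat.div_add_mod, mul_one] at ha
    exact abs_sub_inv_card_le (sum_col_of_mem_doublyStochastic (pow_mem hP t) j) ha i
  refine tendsto_sub_nhds_zero_iff.1 (squeeze_zero_norm hbound ?_)
  exact (tendsto_pow_atTop_nhds_zero_of_lt_one hr0 hr1).comp (Nat.tendsto_div_const_atTop hk.ne')

lemma vecMul_pow_eq_self [DecidableEq n] {P : Matrix n n ℝ} {μ : n → ℝ} (hμ : μ ᵥ* P = μ)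
    (t : ℕ) : μ ᵥ* P ^ t = μ := by
  induction t with
  | zero => simp
  | succ t ih => rw [pow_succ, ← vecMul_vecMul, ih, hμ]

lemma eq_sum_mul_of_vecMul_eq_self [DecidableEq n] {P : Matrix n n ℝ} {c : ℝ}
    (hlim : ∀ i j, Tendsto (fun t => (P ^ t) i j) atTop (𝓝 c)) {μ : n → ℝ} (hμ : μ ᵥ* P = μ)
    (j : n) : μ j = (∑ i, μ i) * c := by
  have hconst : Tendsto (fun t => (μ ᵥ* P ^ t) j) atTop (𝓝 (∑ i, μ i * c)) :=
    tendsto_finsetSum _ fun i _ => (hlim i j).const_mul (μ i)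
  simp only [vecMul_pow_eq_self hμ] at hconst
  rw [tendsto_const_nhds_iff.1 hconst, Finset.sum_mul]

end Doeblin

end Matrix

section MoveDollar
variable {V : Type*} [DecidableEq V] {ξ : V → ℕ} {x y : V}

lemma moveDollar_of_eq_zero (h : ξ x = 0) (y : V) : moveDollar ξ x y = ξ := by
  funext z
  simp [moveDollar, h]

lemma moveDollar_of_ne_zero (h : ξ x ≠ 0) (z : V) :
    moveDollar ξ x y z = ξ z - (if z = x then 1 else 0) + (if z = y then 1 else 0) := by
  simp [moveDollar, h]

@[simp]
lemma moveDollar_self (ξ : V → ℕ) (x : V) : moveDollar ξ x x = ξ := by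
  by_cases h : ξ x = 0
  · exact moveDollar_of_eq_zero h x
  · funext z
    rw [moveDollar_of_ne_zero h]
    split_ifs <;> subst_vars <;> omega

lemma moveDollar_apply_target_ne_zero (h : ξ x ≠ 0) : moveDollar ξ x y y ≠ 0 := by
  rw [moveDollar_of_ne_zero h]
  simp

lemma moveDollar_moveDollar (h : ξ x ≠ 0) (z : V) :
    moveDollar (moveDollar ξ x y) y z = moveDollar ξ x z := by
  funext w
  rw [moveDollar_of_ne_zero (moveDollar_apply_target_ne_zero h), moveDollar_of_ne_zero h,
    moveDollar_of_ne_zero h]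
  split_ifs <;> subst_vars <;> omega

lemma moveDollar_add_single (h : ξ x ≠ 0) :
    moveDollar ξ x y + Pi.single x 1 = ξ + Pi.single y 1 := by
  funext z
  simp only [Pi.add_apply, Pi.single_apply, moveDollar_of_ne_zero h]
  split_ifs <;> subst_vars <;> omega

lemma moveDollar_moveDollar_swap (h : moveDollar ξ x y ≠ ξ) :
    moveDollar (moveDollar ξ x y) y x = ξ := by
  have hx : ξ x ≠ 0 := fun h0 => h (moveDollar_of_eq_zero h0 y)
  rw [moveDollar_moveDollar hx, moveDollar_self]

lemma sum_moveDollar [Fintype V] (ξ : V → ℕ) (x y : V) :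
    ∑ z, moveDollar ξ x y z = ∑ z, ξ z := by
  by_cases h : ξ x = 0
  · rw [moveDollar_of_eq_zero h]
  · have := congrArg (fun f : V → ℕ => ∑ z, f z) (moveDollar_add_single (y := y) h)
    simpa [Finset.sum_add_distrib] using this

end MoveDollar

section StateSpace
variable {V : Type*} [Fintype V] [DecidableEq V] {M : ℕ} {ξ : V → ℕ}

lemma mem_stateSpace : ξ ∈ stateSpace V M ↔ ∑ x, ξ x = M := by
  refine ⟨fun h => (Finset.mem_filter.1 h).2, fun h => Finset.mem_filter.2 ⟨?_, h⟩⟩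
  refine Fintype.mem_piFinset.2 fun x => Finset.mem_range_succ_iff.2 ?_
  exact h ▸ Finset.single_le_sum (fun _ _ => Nat.zero_le _) (Finset.mem_univ x)

lemma moveDollar_mem_stateSpace (hξ : ξ ∈ stateSpace V M) (x y : V) :
    moveDollar ξ x y ∈ stateSpace V M := by
  rwa [mem_stateSpace, sum_moveDollar, ← mem_stateSpace]

lemma single_mem_stateSpace (v : V) : Pi.single v M ∈ stateSpace V M := by
  simp [mem_stateSpace]

lemma card_stateSpace : (stateSpace V M).card = (Fintype.card V + M - 1).choose M := by
  rw [← Sym.card_sym_eq_choose, ← Nat.card_eq_fintype_card, ← Nat.card_eq_finsetCard]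
  exact Nat.card_congr ((Equiv.subtypeEquivRight fun _ => mem_stateSpace).trans
    (Sym.equivNatSumOfFintype V M).symm)

end StateSpace

section Transition
variable {V : Type*} [Fintype V] [DecidableEq V] {G : SimpleGraph V} [DecidableRel G.Adj]
  {M : ℕ}

lemma pOne_nonneg (ξ ξ' : V → ℕ) : 0 ≤ pOne G ξ ξ' := by
  unfold pOne
  positivity

lemma pOne_moveDollar_pos (ξ : V → ℕ) {x y : V} (h : G.Adj x y) :
    0 < pOne G ξ (moveDollar ξ x y) := by
  refine div_pos (Nat.cast_pos.2 (Finset.card_pos.2 ⟨(x, y), ?_⟩))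
    (Nat.cast_pos.2 (Finset.card_pos.2 ⟨(x, y), ?_⟩)) <;> simp [h]

lemma exists_adj_of_pOne_pos {ξ ξ' : V → ℕ} (h : 0 < pOne G ξ ξ') :
    ∃ x y, G.Adj x y ∧ moveDollar ξ x y = ξ' := by
  by_contra! hnone
  have hempty : (Finset.univ.filter fun e : V × V =>
      G.Adj e.1 e.2 ∧ moveDollar ξ e.1 e.2 = ξ') = ∅ :=
    Finset.filter_eq_empty_iff.2 fun e _ he => hnone e.1 e.2 he.1 he.2
  simp [pOne, hempty] at h

lemma pOne_comm (ξ ξ' : V → ℕ) : pOne G ξ ξ' = pOne G ξ' ξ := by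
  obtain rfl | hne := eq_or_ne ξ ξ'
  · rfl
  unfold pOne
  rw [Finset.card_nbij' Prod.swap Prod.swap ?_ ?_ (fun e _ => Prod.swap_swap e)
    (fun e _ => Prod.swap_swap e)]
  all_goals
    rintro ⟨x, y⟩ he
    simp only [Finset.coe_filter, Finset.mem_univ, true_and, Set.mem_ofPred_eq, Prod.swap] at he ⊢
    obtain ⟨hadj, rfl⟩ := he
    refine ⟨hadj.symm, moveDollar_moveDollar_swap ?_⟩
  exacts [Ne.symm hne, hne]

lemma sum_pOne (hG : G ≠ ⊥) {ξ : V → ℕ} (hξ : ξ ∈ stateSpace V M) :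
    ∑ ξ' ∈ stateSpace V M, pOne G ξ ξ' = 1 := by
  set E := Finset.univ.filter fun e : V × V => G.Adj e.1 e.2
  have hE : (E.card : ℝ) ≠ 0 := by
    obtain ⟨x, y, h⟩ := SimpleGraph.ne_bot_iff_exists_adj.1 hG
    exact Nat.cast_ne_zero.2 (Finset.card_ne_zero.2 ⟨(x, y), by simp [E, h]⟩)
  have hfibers := Finset.card_eq_sum_card_fiberwise (f := fun e : V × V => moveDollar ξ e.1 e.2)
    (s := E) fun e _ => moveDollar_mem_stateSpace hξ e.1 e.2
  unfold pOne
  rw [← Finset.sum_div, div_eq_one_iff_eq hE]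
  exact_mod_cast (hfibers.trans (by simp only [E, Finset.filter_filter])).symm

end Transition

section Reachability
variable {V : Type*} [Fintype V] [DecidableEq V] {G : SimpleGraph V} [DecidableRel G.Adj]

lemma reflTransGen_moveDollar {u v : V} (w : G.Walk u v) {ξ : V → ℕ} (hu : ξ u ≠ 0) :
    ReflTransGen (fun ζ ζ' => 0 < pOne G ζ ζ') ξ (moveDollar ξ u v) := by
  induction w generalizing ξ with
  | nil => rw [moveDollar_self]
  | cons hadj _ ih =>
    rw [← moveDollar_moveDollar hu]
    exact .head (pOne_moveDollar_pos ξ hadj) (ih (moveDollar_apply_target_ne_zero hu))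

lemma reflTransGen_single (hG : G.Preconnected) (v : V) (ξ : V → ℕ) :
    ReflTransGen (fun ζ ζ' => 0 < pOne G ζ ζ') ξ (Pi.single v (∑ z, ξ z)) := by
  induction hk : ∑ z, ξ z - ξ v using Nat.strong_induction_on generalizing ξ with
  | _ k ih =>
  by_cases hrest : ∀ u ≠ v, ξ u = 0
  · have hξ : ξ = Pi.single v (ξ v) :=
      funext fun z => by by_cases hz : z = v <;> simp [hz, hrest]
    rw [Fintype.sum_eq_single v hrest, ← hξ]
  push Not at hrest
  obtain ⟨u, huv, hu⟩ := hrest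
  have hmove : moveDollar ξ u v v = ξ v + 1 := by
    simp [moveDollar_of_ne_zero hu, Ne.symm huv]
  refine (reflTransGen_moveDollar (hG u v).some hu).trans ?_
  rw [← sum_moveDollar ξ u v]
  refine ih _ ?_ _ rfl
  have hle := Finset.single_le_sum (fun z _ => Nat.zero_le (moveDollar ξ u v z)) (Finset.mem_univ v)
  rw [sum_moveDollar, hmove] at hle ⊢
  omega

end Reachability

section ModelOneMatrix
variable {V : Type*} [Fintype V] [DecidableEq V] (G : SimpleGraph V) [DecidableRel G.Adj]
  (M : ℕ)

noncomputable def modelOneMatrix : Matrix (stateSpace V M) (stateSpace V M) ℝ :=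
  Matrix.of fun ξ ξ' => pOne G ξ ξ'

lemma pOneIter_eq_pow_apply (t : ℕ) {ξ ξ' : V → ℕ} (hξ : ξ ∈ stateSpace V M)
    (hξ' : ξ' ∈ stateSpace V M) :
    pOneIter G M t ξ ξ' = (modelOneMatrix G M ^ t) ⟨ξ, hξ⟩ ⟨ξ', hξ'⟩ := by
  induction t generalizing ξ' with
  | zero => simp [pOneIter, Matrix.one_apply]
  | succ t ih =>
    rw [pOneIter, pow_succ, Matrix.mul_apply, ← Finset.sum_coe_sort]
    exact Finset.sum_congr rfl fun η _ => by rw [ih η.2]; rfl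

lemma modelOneMatrix_mem_doublyStochastic (hG : G ≠ ⊥) :
    modelOneMatrix G M ∈ doublyStochastic ℝ (stateSpace V M) := by
  have hrow : ∀ ξ : stateSpace V M, ∑ ξ', modelOneMatrix G M ξ ξ' = 1 := fun ξ =>
    (Finset.sum_coe_sort (stateSpace V M) (pOne G ξ)).trans (sum_pOne hG ξ.2)
  refine mem_doublyStochastic_iff_sum.2 ⟨fun _ _ => pOne_nonneg _ _, hrow, fun ξ' => ?_⟩
  rw [← hrow ξ']
  exact Finset.sum_congr rfl fun ξ _ => pOne_comm _ _

lemma isPrimitive_modelOneMatrix [Nontrivial V] (hG : G.Preconnected) :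
    (modelOneMatrix G M).IsPrimitive := by
  obtain ⟨v⟩ := (inferInstance : Nonempty V)
  set P := modelOneMatrix G M
  have hP : ∀ ξ ξ', 0 ≤ P ξ ξ' := fun _ _ => pOne_nonneg _ _
  let hub : stateSpace V M := ⟨Pi.single v M, single_mem_stateSpace v⟩
  have hreach : ∀ ξ, ReflTransGen (fun ζ ζ' => 0 < P ζ ζ') ξ hub := fun ξ => by
    have h := reflTransGen_single hG v ξ
    rw [mem_stateSpace.1 ξ.2] at h
    obtain ⟨_, h⟩ := h.exists_subtype (s := stateSpace V M) (fun ζ ζ' hζ hstep => by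
      obtain ⟨x, y, -, rfl⟩ := exists_adj_of_pOne_pos hstep
      exact moveDollar_mem_stateSpace hζ x y) ξ.2
    exact h
  have : Std.Symm fun ζ ζ' => 0 < P ζ ζ' := ⟨fun ζ ζ' h => h.trans_eq (pOne_comm _ _)⟩
  obtain ⟨u, hvu⟩ := hG.exists_adj_of_nontrivial v
  have hloop : 0 < P hub hub := by
    have h := pOne_moveDollar_pos (G := G) (Pi.single v M) hvu.symm
    rwa [moveDollar_of_eq_zero (Pi.single_eq_of_ne hvu.ne.symm M)] at h
  exact Matrix.isPrimitive_of_loop hP hloop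
    (fun ξ => Matrix.exists_pow_apply_pos_of_reflTransGen hP (hreach ξ))
    (fun ξ => Matrix.exists_pow_apply_pos_of_reflTransGen hP (Std.Symm.symm _ _ (hreach ξ)))

end ModelOneMatrix

theorem model_one_stationary_uniform_and_convergence_general {V : Type*} [Fintype V]
    [DecidableEq V] (G : SimpleGraph V) [DecidableRel G.Adj] (hG : G.Connected)
    (N M : ℕ) (hV : Fintype.card V = N) (hN : 2 ≤ N) :
    (∀ μ : (V → ℕ) → ℝ, (∀ ξ ∈ stateSpace V M, 0 ≤ μ ξ) →
      (∑ ξ ∈ stateSpace V M, μ ξ = 1) →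
      (∀ ξ' ∈ stateSpace V M, ∑ ξ ∈ stateSpace V M, μ ξ * pOne G ξ ξ' = μ ξ') →
      ∀ ξ ∈ stateSpace V M, μ ξ = 1 / ((M + N - 1).choose (N - 1) : ℝ)) ∧
    (∀ ξ₀ ∈ stateSpace V M, ∀ ξ ∈ stateSpace V M,
      Tendsto (fun t => pOneIter G M t ξ₀ ξ) atTop
        (nhds (1 / ((M + N - 1).choose (N - 1) : ℝ)))) := by
  have : Nontrivial V := Fintype.one_lt_card_iff_nontrivial.1 (by omega)
  obtain ⟨v⟩ := hG.nonempty
  obtain ⟨u, hvu⟩ := hG.preconnected.exists_adj_of_nontrivial v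
  have hP := modelOneMatrix_mem_doublyStochastic G M
    (SimpleGraph.ne_bot_iff_exists_adj.2 ⟨v, u, hvu⟩)
  have hlim := (isPrimitive_modelOneMatrix G M hG.preconnected).tendsto_pow_apply hP
  have hcard : ((M + N - 1).choose (N - 1) : ℝ) = Fintype.card (stateSpace V M) := by
    rw [Fintype.card_coe, card_stateSpace, hV, Nat.add_comm N M,
      Nat.choose_symm_of_eq_add (show M + N - 1 = N - 1 + M by omega)]
  rw [hcard, one_div]
  refine ⟨fun μ _ hsum hstat ξ hξ => ?_, fun ξ₀ hξ₀ ξ hξ => ?_⟩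
  · have hfix : Matrix.vecMul (fun ζ : stateSpace V M => μ ζ) (modelOneMatrix G M) =
        fun ζ : stateSpace V M => μ ζ :=
      funext fun ζ => by rw [← hstat ζ ζ.2, ← Finset.sum_coe_sort]; rfl
    have h := Matrix.eq_sum_mul_of_vecMul_eq_self hlim hfix ⟨ξ, hξ⟩
    rwa [Finset.sum_coe_sort (stateSpace V M) μ, hsum, one_mul] at h
  · exact (hlim ⟨ξ₀, hξ₀⟩ ⟨ξ, hξ⟩).congr fun t => (pOneIter_eq_pow_apply G M t hξ₀ hξ).symm

/-- For Model 1 on a connected graph with `N ≥ 2` and `M ≥ 1`: the unique stationary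
distribution is uniform on `𝒜_{N,M}` (of cardinality `C(M+N−1, N−1)`), and from any
initial configuration the distribution at time `t` converges to it. -/
theorem model_one_stationary_uniform_and_convergence {V : Type*} [Fintype V]
    [DecidableEq V] (G : SimpleGraph V) [DecidableRel G.Adj] (hG : G.Connected)
    (N M : ℕ) (hV : Fintype.card V = N) (hN : 2 ≤ N) (hM : 1 ≤ M) :
    (∀ μ : (V → ℕ) → ℝ, (∀ ξ ∈ stateSpace V M, 0 ≤ μ ξ) →
      (∑ ξ ∈ stateSpace V M, μ ξ = 1) →
      (∀ ξ' ∈ stateSpace V M, ∑ ξ ∈ stateSpace V M, μ ξ * pOne G ξ ξ' = μ ξ') →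
      ∀ ξ ∈ stateSpace V M, μ ξ = 1 / ((M + N - 1).choose (N - 1) : ℝ)) ∧
    (∀ ξ₀ ∈ stateSpace V M, ∀ ξ ∈ stateSpace V M,
      Tendsto (fun t => pOneIter G M t ξ₀ ξ) atTop
        (nhds (1 / ((M + N - 1).choose (N - 1) : ℝ)))) :=
  model_one_stationary_uniform_and_convergence_general G hG N M hV hN
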